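/- arXiv:2409.18791 — 9 statements merged into one kernel-verified Lean document; each statement's English description precedes it below -/
import Mathlib

section
/- Let ρ be an n×n complex positive semidefinite Hermitian matrix with trace 1, let Λ be an n×n Hermitian matrix, and set D = (ρΛ + Λρ)/2. Assume tr D = 0. Then for every n×n Hermitian matrix O, the real numbers tr(DO), tr(ρO), tr(ρO²), tr(ρΛ²) satisfy (tr(DO))² ≤ (tr(ρO²) − (tr(ρO))²) · tr(ρΛ²). (In words: the signal-to-noise ratio of any observable is bounded by the quantum Fisher information tr(ρΛ²).) -/
/-!
For positive semidefinite `ρ`, `(X, Y) ↦ re tr(ρXY)` is a positive semidefinite real inner product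
on Hermitian matrices: it is the restriction of the semi-inner product `⟪X, Y⟫ = tr(Y ρ Xᴴ)` that
`ρ` induces on all matrices. Since `tr D = tr(ρΛ) = 0`, the signal `re tr(DO) = re tr(ρΛO)` is
unchanged when `O` is replaced by its centred version `O - ⟨O⟩` with `⟨O⟩ = re tr(ρO)`, whose
square norm is the variance of `O`. Cauchy–Schwarz for `Λ` and `O - ⟨O⟩` is then the claim.
-/

open scoped ComplexOrder

open RCLike

namespace Matrix

variable {n 𝕜 : Type*} [Fintype n] [RCLike 𝕜]

theorem PosSemidef.norm_trace_mul_mul_conjTranspose_sq_le {ρ : Matrix n n 𝕜}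
    (hρ : ρ.PosSemidef) (X Y : Matrix n n 𝕜) :
    ‖(Y * ρ * Xᴴ).trace‖ ^ 2 ≤ re (X * ρ * Xᴴ).trace * re (Y * ρ * Yᴴ).trace := by
  let := ρ.toMatrixSeminormedAddCommGroup hρ
  let := ρ.toMatrixInnerProductSpace hρ
  have h := inner_mul_inner_self_le (𝕜 := 𝕜) X Y
  rwa [norm_inner_symm Y X, ← sq] at h

theorem IsHermitian.re_trace_mul_mul_comm {ρ X Y : Matrix n n 𝕜} (hρ : ρ.IsHermitian)
    (hX : X.IsHermitian) (hY : Y.IsHermitian) :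
    re (ρ * (X * Y)).trace = re (ρ * (Y * X)).trace := by
  rw [← conj_re, ← star_def, ← trace_conjTranspose, conjTranspose_mul, conjTranspose_mul,
    hρ.eq, hX.eq, hY.eq, trace_mul_comm]

theorem PosSemidef.re_trace_mul_mul_sq_le {ρ X Y : Matrix n n 𝕜} (hρ : ρ.PosSemidef)
    (hX : X.IsHermitian) (hY : Y.IsHermitian) :
    re (ρ * (X * Y)).trace ^ 2 ≤ re (ρ * (X * X)).trace * re (ρ * (Y * Y)).trace := by
  have hcycle : ∀ A B : Matrix n n 𝕜, (A * ρ * B).trace = (ρ * (B * A)).trace := fun A B => by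
    rw [Matrix.mul_assoc, trace_mul_comm, Matrix.mul_assoc]
  have hcs := hρ.norm_trace_mul_mul_conjTranspose_sq_le X Y
  rw [hX.eq, hY.eq, hcycle, hcycle, hcycle] at hcs
  calc re (ρ * (X * Y)).trace ^ 2 ≤ ‖(ρ * (X * Y)).trace‖ ^ 2 := by
        rw [← sq_abs]; gcongr; exact abs_re_le_norm _
    _ ≤ _ := hcs

theorem IsHermitian.re_trace_jordan_mul {ρ Λ O : Matrix n n 𝕜} (hρ : ρ.IsHermitian)
    (hΛ : Λ.IsHermitian) (hO : O.IsHermitian) :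
    re (((1 / 2 : 𝕜) • (ρ * Λ + Λ * ρ)) * O).trace = re (ρ * (Λ * O)).trace := by
  have hcycle : (Λ * ρ * O).trace = (ρ * (O * Λ)).trace := by
    rw [Matrix.mul_assoc, trace_mul_comm, Matrix.mul_assoc]
  rw [smul_mul, trace_smul, Matrix.add_mul, trace_add, hcycle, Matrix.mul_assoc,
    show (1 / 2 : 𝕜) = ((1 / 2 : ℝ) : 𝕜) by push_cast; rfl, smul_eq_mul, re_ofReal_mul,
    map_add, hρ.re_trace_mul_mul_comm hO hΛ]
  ring

theorem re_trace_mul_sub_smul_one_mul_self [DecidableEq n] (ρ O : Matrix n n 𝕜) (c : ℝ) :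
    re (ρ * ((O - (c : 𝕜) • 1) * (O - (c : 𝕜) • 1))).trace =
      re (ρ * (O * O)).trace - 2 * c * re (ρ * O).trace + c ^ 2 * re ρ.trace := by
  have hsq : (O - (c : 𝕜) • 1) * (O - (c : 𝕜) • 1) =
      O * O - ((2 * c : ℝ) : 𝕜) • O + ((c ^ 2 : ℝ) : 𝕜) • 1 := by
    push_cast
    simp only [Matrix.sub_mul, Matrix.mul_sub, Matrix.smul_mul, Matrix.mul_smul, Matrix.one_mul,
      Matrix.mul_one]
    module
  simp only [hsq, Matrix.mul_add, Matrix.mul_sub, Matrix.mul_smul, Matrix.mul_one, trace_add,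
    trace_sub, trace_smul, smul_eq_mul, map_add, map_sub, re_ofReal_mul]

end Matrix

open Matrix

/-- For a density matrix `ρ` with symmetric logarithmic derivative `Λ` (i.e.
`D = (ρΛ + Λρ)/2` with `tr D = 0`), the signal-to-noise ratio of any Hermitian
observable `O` is bounded by the quantum Fisher information `tr(ρΛ²)`. -/
theorem snr_le_qfi {n : ℕ} (ρ Λ D : Matrix (Fin n) (Fin n) ℂ)
    (hρ : ρ.PosSemidef) (hρtr : ρ.trace = 1) (hΛ : Λ.IsHermitian)
    (hDdef : D = (1 / 2 : ℂ) • (ρ * Λ + Λ * ρ)) (hDtr : D.trace = 0) :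
    ∀ O : Matrix (Fin n) (Fin n) ℂ, O.IsHermitian →
      ((D * O).trace.re) ^ 2 ≤
        ((ρ * O ^ 2).trace.re - ((ρ * O).trace.re) ^ 2) * (ρ * Λ ^ 2).trace.re := by
  intro O hO
  set μ := (ρ * O).trace.re with hμ
  have hρΛ : (ρ * Λ).trace = 0 := by
    rw [hDdef, trace_smul, trace_add, trace_mul_comm Λ ρ] at hDtr
    simpa using hDtr
  have hO' : (O - (μ : ℂ) • 1).IsHermitian := hO.sub (isHermitian_one.smul (Complex.conj_ofReal μ))
  have signal : (D * O).trace.re = (ρ * (Λ * (O - (μ : ℂ) • 1))).trace.re := by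
    rw [hDdef, ← RCLike.re_to_complex, hρ.isHermitian.re_trace_jordan_mul hΛ hO]
    simp [Matrix.mul_sub, hρΛ]
  have variance : (ρ * O ^ 2).trace.re - μ ^ 2 =
      (ρ * ((O - (μ : ℂ) • 1) * (O - (μ : ℂ) • 1))).trace.re := by
    have h := re_trace_mul_sub_smul_one_mul_self ρ O μ
    simp only [RCLike.re_to_complex, RCLike.ofReal_eq_complex_ofReal, hρtr, Complex.one_re,
      mul_one, ← hμ] at h
    rw [sq O, h]
    ring
  rw [signal, variance, sq Λ, mul_comm]
  exact hρ.re_trace_mul_mul_sq_le hΛ hO'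
end

section
/- Let ρ be an n×n complex positive semidefinite Hermitian matrix with trace 1, Λ an n×n Hermitian matrix with D = (ρΛ + Λρ)/2 satisfying tr D = 0, and assume tr(ρΛ²) > 0. Then the set { (tr(DO))²/(tr(ρO²) − (tr(ρO))²) : O Hermitian with tr(ρO²) − (tr(ρO))² > 0 } has greatest element tr(ρΛ²), and this greatest value is attained at O = Λ (indeed tr(ρΛ) = 0 and tr(DΛ) = tr(ρΛ²)). -/
/-!
Since `tr D = tr(ρΛ)` and `tr(DΛ) = tr(ρΛ²)`, the first claims are immediate, and `O = Λ` has
signal-to-noise ratio `tr(ρΛ²)² / tr(ρΛ²)`. For the bound, the form `(A, B) ↦ re tr(ρAB)` on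
Hermitian matrices is positive semidefinite, hence satisfies Cauchy–Schwarz. Centring `O` at its
mean `c = re tr(ρO)` does not change `re tr(DO) = re tr(ρΛO)` (because `tr(ρΛ) = 0`) and turns
`re tr(ρ(O - c)²)` into the variance, so `re tr(DO)² ≤ tr(ρΛ²) · Var(O)`.
-/

open scoped ComplexOrder

namespace Matrix

variable {m : Type*} [Fintype m]

lemma re_trace_mul_mul_comm_of_isHermitian {ρ A B : Matrix m m ℂ} (hρ : ρ.IsHermitian)
    (hA : A.IsHermitian) (hB : B.IsHermitian) :
    (ρ * (B * A)).trace.re = (ρ * (A * B)).trace.re := by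
  have : (ρ * (B * A)).trace = star (ρ * (A * B)).trace := by
    rw [← trace_conjTranspose, conjTranspose_mul, conjTranspose_mul, hρ.eq, hA.eq, hB.eq,
      trace_mul_comm, mul_assoc]
  rw [this, Complex.star_def, Complex.conj_re]

lemma trace_eq_trace_mul_of_sld {ρ Λ D : Matrix m m ℂ}
    (hD : D = (1 / 2 : ℂ) • (ρ * Λ + Λ * ρ)) : D.trace = (ρ * Λ).trace := by
  rw [hD, trace_smul, trace_add, trace_mul_comm Λ ρ, smul_eq_mul]
  ring

lemma re_trace_mul_eq_of_sld {ρ Λ D O : Matrix m m ℂ} (hρ : ρ.IsHermitian)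
    (hΛ : Λ.IsHermitian) (hO : O.IsHermitian) (hD : D = (1 / 2 : ℂ) • (ρ * Λ + Λ * ρ)) :
    (D * O).trace.re = (ρ * (Λ * O)).trace.re := by
  rw [hD, Matrix.smul_mul, Matrix.add_mul, trace_smul, trace_add, trace_mul_cycle Λ ρ O,
    trace_mul_comm (O * Λ), mul_assoc, smul_eq_mul]
  simp only [Complex.mul_re, Complex.add_re, Complex.add_im,
    re_trace_mul_mul_comm_of_isHermitian hρ hO hΛ]
  norm_num
  ring

variable [DecidableEq m]

lemma trace_mul_self_eq_trace_mul_sq_of_sld {ρ Λ D : Matrix m m ℂ}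
    (hD : D = (1 / 2 : ℂ) • (ρ * Λ + Λ * ρ)) : (D * Λ).trace = (ρ * Λ ^ 2).trace := by
  rw [hD, Matrix.smul_mul, Matrix.add_mul, trace_smul, trace_add, trace_mul_cycle Λ ρ Λ,
    trace_mul_comm (Λ * Λ), mul_assoc, ← sq, smul_eq_mul]
  ring

lemma PosSemidef.re_trace_mul_sq_nonneg {ρ A : Matrix m m ℂ} (hρ : ρ.PosSemidef)
    (hA : A.IsHermitian) : 0 ≤ (ρ * A ^ 2).trace.re := by
  have h := (hρ.conjTranspose_mul_mul_same A).trace_nonneg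
  rw [hA.eq, mul_assoc, trace_mul_comm, mul_assoc, ← sq] at h
  exact Complex.nonneg_iff.mp h |>.1

lemma PosSemidef.sq_re_trace_mul_mul_le {ρ A B : Matrix m m ℂ} (hρ : ρ.PosSemidef)
    (hA : A.IsHermitian) (hB : B.IsHermitian) :
    (ρ * (A * B)).trace.re ^ 2 ≤ (ρ * A ^ 2).trace.re * (ρ * B ^ 2).trace.re := by
  have hquad : ∀ x : ℝ, 0 ≤ (ρ * B ^ 2).trace.re * (x * x)
      + 2 * (ρ * (A * B)).trace.re * x + (ρ * A ^ 2).trace.re := by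
    intro x
    have hX : (A + x • B).IsHermitian := hA.add (hB.smul (IsSelfAdjoint.all x))
    have h := hρ.re_trace_mul_sq_nonneg hX
    have hsym := re_trace_mul_mul_comm_of_isHermitian hρ.isHermitian hA hB
    simp only [sq, add_mul, mul_add, Matrix.smul_mul, Matrix.mul_smul, trace_add, trace_smul,
      Complex.add_re, Complex.real_smul, Complex.re_ofReal_mul] at h ⊢
    rw [hsym] at h
    linarith
  have := discrim_le_zero hquad
  rw [discrim] at this
  nlinarith

lemma trace_mul_mul_sub_smul_one (ρ A B : Matrix m m ℂ) (c : ℝ) :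
    (ρ * (A * (B - c • 1))).trace = (ρ * (A * B)).trace - c * (ρ * A).trace := by
  simp only [Matrix.mul_sub, Matrix.mul_smul, Matrix.mul_one, trace_sub, trace_smul,
    Complex.real_smul]

lemma re_trace_mul_sub_smul_one_sq {ρ : Matrix m m ℂ} (hρ : ρ.trace = 1) (A : Matrix m m ℂ)
    (c : ℝ) : (ρ * (A - c • 1) ^ 2).trace.re
      = (ρ * A ^ 2).trace.re - 2 * c * (ρ * A).trace.re + c ^ 2 := by
  simp only [sq, Matrix.mul_sub, Matrix.sub_mul, Matrix.mul_smul, Matrix.smul_mul,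
    Matrix.mul_one, Matrix.one_mul, trace_sub, trace_smul, hρ, Complex.sub_re,
    Complex.real_smul, Complex.re_ofReal_mul, Complex.one_re]
  ring

lemma PosSemidef.sq_re_trace_mul_le_variance_of_sld {ρ Λ D O : Matrix m m ℂ}
    (hρ : ρ.PosSemidef) (hρtr : ρ.trace = 1) (hΛ : Λ.IsHermitian) (hO : O.IsHermitian)
    (hD : D = (1 / 2 : ℂ) • (ρ * Λ + Λ * ρ)) (hρΛ : (ρ * Λ).trace = 0) :
    (D * O).trace.re ^ 2
      ≤ (ρ * Λ ^ 2).trace.re * ((ρ * O ^ 2).trace.re - (ρ * O).trace.re ^ 2) := by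
  set c := (ρ * O).trace.re
  have hOc : (O - c • 1).IsHermitian := hO.sub (isHermitian_one.smul (IsSelfAdjoint.all c))
  calc (D * O).trace.re ^ 2 = (ρ * (Λ * (O - c • 1))).trace.re ^ 2 := by
        rw [re_trace_mul_eq_of_sld hρ.isHermitian hΛ hO hD, trace_mul_mul_sub_smul_one, hρΛ,
          mul_zero, sub_zero]
    _ ≤ (ρ * Λ ^ 2).trace.re * (ρ * (O - c • 1) ^ 2).trace.re :=
        hρ.sq_re_trace_mul_mul_le hΛ hOc
    _ = (ρ * Λ ^ 2).trace.re * ((ρ * O ^ 2).trace.re - c ^ 2) := by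
        rw [re_trace_mul_sub_smul_one_sq hρtr]
        ring

end Matrix

/-- The quantum Fisher information `tr(ρΛ²)` is the greatest signal-to-noise ratio
over all Hermitian observables with positive variance, and is attained at `O = Λ`
(indeed `tr(ρΛ) = 0` and `tr(DΛ) = tr(ρΛ²)`). -/
theorem qfi_eq_max_snr {n : ℕ} (ρ Λ D : Matrix (Fin n) (Fin n) ℂ)
    (hρ : ρ.PosSemidef) (hρtr : ρ.trace = 1) (hΛ : Λ.IsHermitian)
    (hDdef : D = (1 / 2 : ℂ) • (ρ * Λ + Λ * ρ)) (hDtr : D.trace = 0)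
    (hQFI : 0 < (ρ * Λ ^ 2).trace.re) :
    IsGreatest
      {s : ℝ | ∃ O : Matrix (Fin n) (Fin n) ℂ, O.IsHermitian ∧
        0 < (ρ * O ^ 2).trace.re - ((ρ * O).trace.re) ^ 2 ∧
        s = ((D * O).trace.re) ^ 2 /
          ((ρ * O ^ 2).trace.re - ((ρ * O).trace.re) ^ 2)}
      ((ρ * Λ ^ 2).trace.re)
    ∧ (ρ * Λ).trace = 0 ∧ (D * Λ).trace = (ρ * Λ ^ 2).trace := by
  have hρΛ : (ρ * Λ).trace = 0 := (Matrix.trace_eq_trace_mul_of_sld hDdef).symm.trans hDtr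
  have hDΛ := Matrix.trace_mul_self_eq_trace_mul_sq_of_sld hDdef
  refine ⟨⟨⟨Λ, hΛ, by simpa [hρΛ] using hQFI, ?_⟩, ?_⟩, hρΛ, hDΛ⟩
  · rw [hρΛ, hDΛ, Complex.zero_re, zero_pow two_ne_zero, sub_zero,
      eq_div_iff hQFI.ne', ← sq]
  · rintro s ⟨O, hO, hvar, rfl⟩
    rw [div_le_iff₀ hvar]
    exact hρ.sq_re_trace_mul_le_variance_of_sld hρtr hΛ hO hDdef hρΛ
end

section
/- Let ρ be an n×n complex positive semidefinite Hermitian matrix with trace 1, and let D be an n×n Hermitian matrix. Suppose O₀ is an n×n Hermitian matrix with tr(DO₀) = 1 that minimizes tr(ρO²) over all Hermitian O with tr(DO) = 1, i.e. tr(ρO₀²) ≤ tr(ρO²) for all such O. Then there exists a real number λ such that ρO₀ + O₀ρ = λD. -/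
/-!
Perturb the minimizer along a Hermitian direction `H` tangent to the constraint,
`tr(D H) = 0`. Then `t ↦ tr(ρ (O₀ + t H)²)` is a real quadratic polynomial minimized at `t = 0`,
and its linear coefficient `tr((ρ O₀ + O₀ ρ) H)` must vanish. So the Hermitian matrix
`S = ρ O₀ + O₀ ρ` is orthogonal, in the trace inner product, to every Hermitian matrix orthogonal
to `D`; taking `H = S - λ D` with `λ = tr(D S) / tr(D²)` gives `tr(H²) = 0`, hence `S = λ D`.
-/

open scoped ComplexOrder
open Matrix

theorem eq_zero_of_forall_mul_add_mul_sq_nonneg {c d : ℝ} (h : ∀ t : ℝ, 0 ≤ c * t + d * t ^ 2) :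
    c = 0 := by
  have hderiv : HasDerivAt (fun t => c * t + d * t ^ 2) c 0 := by
    simpa using ((hasDerivAt_id' (0 : ℝ)).const_mul c).fun_add
      ((hasDerivAt_pow 2 (0 : ℝ)).const_mul d)
  have hmin : IsLocalMin (fun t => c * t + d * t ^ 2) 0 :=
    Filter.Eventually.of_forall fun t => by simpa using h t
  exact hmin.hasDerivAt_eq_zero hderiv

namespace Matrix

variable {n 𝕜 : Type*} [Fintype n] [RCLike 𝕜]

theorem trace_mul_add_smul_sq [DecidableEq n] {R : Type*} [CommRing R] (ρ O H : Matrix n n R)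
    (t : R) :
    (ρ * (O + t • H) ^ 2).trace =
      (ρ * O ^ 2).trace + t * ((ρ * O + O * ρ) * H).trace + t ^ 2 * (ρ * H ^ 2).trace := by
  have hcyc : (ρ * (H * O)).trace = (O * (ρ * H)).trace := by
    rw [← Matrix.mul_assoc, trace_mul_cycle, Matrix.mul_assoc]
  simp only [sq, Matrix.add_mul, Matrix.mul_add, Matrix.smul_mul, Matrix.mul_smul,
    trace_add, trace_smul, smul_eq_mul, Matrix.mul_assoc, hcyc]
  ring

theorem IsHermitian.anticommutator {A B : Matrix n n 𝕜} (hA : A.IsHermitian)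
    (hB : B.IsHermitian) : (A * B + B * A).IsHermitian := by
  rw [IsHermitian, conjTranspose_add, conjTranspose_mul, conjTranspose_mul, hA.eq, hB.eq,
    add_comm]

theorem IsHermitian.ofReal_re_trace_mul {A B : Matrix n n 𝕜} (hA : A.IsHermitian)
    (hB : B.IsHermitian) : (RCLike.re (A * B).trace : 𝕜) = (A * B).trace := by
  rw [← RCLike.conj_eq_iff_re, ← RCLike.star_def, ← trace_conjTranspose, conjTranspose_mul,
    hA.eq, hB.eq, trace_mul_comm]

theorem IsHermitian.eq_zero_of_trace_mul_self_eq_zero {A : Matrix n n 𝕜} (hA : A.IsHermitian)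
    (h : (A * A).trace = 0) : A = 0 := by
  rwa [← trace_conjTranspose_mul_self_eq_zero_iff, hA.eq]

theorem trace_anticommutator_mul_eq_zero_of_forall_le [DecidableEq n] {ρ O H : Matrix n n 𝕜}
    (hρ : ρ.IsHermitian) (hO : O.IsHermitian) (hH : H.IsHermitian)
    (hle : ∀ t : ℝ,
      RCLike.re (ρ * O ^ 2).trace ≤ RCLike.re (ρ * (O + (t : 𝕜) • H) ^ 2).trace) :
    ((ρ * O + O * ρ) * H).trace = 0 := by
  rw [← (hρ.anticommutator hO).ofReal_re_trace_mul hH, RCLike.ofReal_eq_zero]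
  refine eq_zero_of_forall_mul_add_mul_sq_nonneg (d := RCLike.re (ρ * H ^ 2).trace) fun t => ?_
  have := hle t
  rw [trace_mul_add_smul_sq, map_add, map_add, RCLike.re_ofReal_mul, ← RCLike.ofReal_pow,
    RCLike.re_ofReal_mul] at this
  linarith

theorem IsHermitian.exists_eq_real_smul_of_trace_mul_eq_zero {S D : Matrix n n 𝕜}
    (hS : S.IsHermitian) (hD : D.IsHermitian) (hD0 : D ≠ 0)
    (h : ∀ H : Matrix n n 𝕜, H.IsHermitian → (D * H).trace = 0 → (S * H).trace = 0) :
    ∃ l : ℝ, S = (l : 𝕜) • D := by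
  have hDD : RCLike.re (D * D).trace ≠ 0 := by
    rw [← RCLike.ofReal_ne_zero (K := 𝕜), hD.ofReal_re_trace_mul hD]
    exact fun h0 => hD0 (hD.eq_zero_of_trace_mul_self_eq_zero h0)
  set l := RCLike.re (D * S).trace / RCLike.re (D * D).trace
  set H := S - (l : 𝕜) • D
  have hH : H.IsHermitian := hS.sub (hD.smul (RCLike.conj_ofReal (K := 𝕜) l))
  have hDH : (D * H).trace = 0 := by
    rw [Matrix.mul_sub, trace_sub, Matrix.mul_smul, trace_smul, smul_eq_mul,
      ← hD.ofReal_re_trace_mul hS, ← hD.ofReal_re_trace_mul hD, ← RCLike.ofReal_mul,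
      div_mul_cancel₀ _ hDD, sub_self]
  have hHH : (H * H).trace = 0 := by
    calc (H * H).trace = (S * H).trace - l * (D * H).trace := by
          rw [Matrix.sub_mul, trace_sub, Matrix.smul_mul, trace_smul, smul_eq_mul]
      _ = 0 := by rw [h H hH hDH, hDH, mul_zero, sub_zero]
  exact ⟨l, sub_eq_zero.mp (hH.eq_zero_of_trace_mul_self_eq_zero hHH)⟩

end Matrix

theorem minimizer_satisfies_sld_equation_general {n : ℕ} (ρ D O₀ : Matrix (Fin n) (Fin n) ℂ)
    (hρ : ρ.PosSemidef) (hD : D.IsHermitian)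
    (hO₀ : O₀.IsHermitian) (hO₀c : (D * O₀).trace = 1)
    (hmin : ∀ O : Matrix (Fin n) (Fin n) ℂ, O.IsHermitian → (D * O).trace = 1 →
      (ρ * O₀ ^ 2).trace.re ≤ (ρ * O ^ 2).trace.re) :
    ∃ l : ℝ, ρ * O₀ + O₀ * ρ = (l : ℂ) • D := by
  have hD0 : D ≠ 0 := by
    rintro rfl
    simp at hO₀c
  refine (hρ.1.anticommutator hO₀).exists_eq_real_smul_of_trace_mul_eq_zero hD hD0
    fun H hH hDH => trace_anticommutator_mul_eq_zero_of_forall_le hρ.1 hO₀ hH fun t => ?_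
  refine hmin _ (hO₀.add (hH.smul (RCLike.conj_ofReal t))) ?_
  rw [Matrix.mul_add, trace_add, hO₀c, Matrix.mul_smul, trace_smul, hDH, smul_zero, add_zero]

/-- Lagrange-multiplier stationarity: a Hermitian `O₀` with `tr(D O₀) = 1` minimizing
`tr(ρ O²)` over all Hermitian `O` with `tr(D O) = 1` satisfies `ρO₀ + O₀ρ = λ D`
for some real `λ`. -/
theorem minimizer_satisfies_sld_equation {n : ℕ} (ρ D O₀ : Matrix (Fin n) (Fin n) ℂ)
    (hρ : ρ.PosSemidef) (hρtr : ρ.trace = 1) (hD : D.IsHermitian)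
    (hO₀ : O₀.IsHermitian) (hO₀c : (D * O₀).trace = 1)
    (hmin : ∀ O : Matrix (Fin n) (Fin n) ℂ, O.IsHermitian → (D * O).trace = 1 →
      (ρ * O₀ ^ 2).trace.re ≤ (ρ * O ^ 2).trace.re) :
    ∃ l : ℝ, ρ * O₀ + O₀ * ρ = (l : ℂ) • D :=
  minimizer_satisfies_sld_equation_general ρ D O₀ hρ hD hO₀ hO₀c hmin
end

section
/- Let Γ > 0, n_E > 0 and n > 0 be real numbers. Then the set { h₁₁²·Γ(1+n_E)·n + h₂₂²·Γn_E·(n+1) : h₁₁, h₂₂ ∈ ℝ with 1 + h₁₁·Γ(1+n_E) + h₂₂·Γn_E = 0 } has least element n(n+1)/(Γ((n+1)(1+2n_E) − n_E)), which equals n/(Γ(1 + 2n_E − n_E/(n+1))). -/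
/-!
Writing the constraint as `u a + v b = -1`, Cauchy–Schwarz against the weights `p, q` gives
`1 = (u a + v b)² ≤ (u² a p + v² b q) (a / p + b / q)`; concretely the defect is the square
`a b (u p - v q)²`. Equality holds for `(u, v) ∝ (q, p)`, so the minimum is `p q / (a q + b p)`.
-/

theorem mul_sq_add_le_weighted_sq_mul {a b p q : ℝ} (hab : 0 ≤ a * b) (u v : ℝ) :
    p * q * (u * a + v * b) ^ 2 ≤ (u ^ 2 * a * p + v ^ 2 * b * q) * (a * q + b * p) := by
  have hdefect : (u ^ 2 * a * p + v ^ 2 * b * q) * (a * q + b * p) - p * q * (u * a + v * b) ^ 2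
      = a * b * (u * p - v * q) ^ 2 := by ring
  linarith [mul_nonneg hab (sq_nonneg (u * p - v * q))]

theorem isLeast_weighted_sq_of_linear_constraint {a b p q : ℝ} (hab : 0 ≤ a * b)
    (hD : 0 < a * q + b * p) :
    IsLeast {x : ℝ | ∃ u v : ℝ, 1 + u * a + v * b = 0 ∧ x = u ^ 2 * a * p + v ^ 2 * b * q}
      (p * q / (a * q + b * p)) := by
  have hD₀ : a * q + b * p ≠ 0 := hD.ne'
  refine ⟨⟨-q / (a * q + b * p), -p / (a * q + b * p), ?_, ?_⟩, ?_⟩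
  · linear_combination -mul_inv_cancel₀ hD₀
  · field_simp
  · rintro x ⟨u, v, hconstr, rfl⟩
    have hsq : (u * a + v * b) ^ 2 = 1 := by
      rw [show u * a + v * b = -1 by linarith]
      norm_num
    rw [div_le_iff₀ hD]
    simpa [hsq] using mul_sq_add_le_weighted_sq_mul hab u v (p := p) (q := q)

/-- Optimization over the free parameters `h₁₁, h₂₂` in the Lindblad-space bound
for frequency estimation of a bosonic mode coupled to a thermal bath. -/
theorem frequency_bound_optimization (Γ nE n : ℝ) (hΓ : 0 < Γ) (hnE : 0 < nE) (hn : 0 < n) :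
    IsLeast
      {x : ℝ | ∃ h₁₁ h₂₂ : ℝ,
        1 + h₁₁ * (Γ * (1 + nE)) + h₂₂ * (Γ * nE) = 0 ∧
        x = h₁₁ ^ 2 * (Γ * (1 + nE)) * n + h₂₂ ^ 2 * (Γ * nE) * (n + 1)}
      (n * (n + 1) / (Γ * ((n + 1) * (1 + 2 * nE) - nE)))
    ∧ n * (n + 1) / (Γ * ((n + 1) * (1 + 2 * nE) - nE))
        = n / (Γ * (1 + 2 * nE - nE / (n + 1))) := by
  have hdenom : Γ * ((n + 1) * (1 + 2 * nE) - nE) = Γ * (1 + nE) * (n + 1) + Γ * nE * n := by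
    ring
  constructor
  · rw [hdenom]
    exact isLeast_weighted_sq_of_linear_constraint (by positivity) (by positivity)
  · have hn1 : n + 1 ≠ 0 := by positivity
    rw [show 1 + 2 * nE - nE / (n + 1) = ((n + 1) * (1 + 2 * nE) - nE) / (n + 1) by
      field_simp]
    rw [mul_div_assoc', div_div_eq_mul_div]
end

section
/- Let Γ > 0 and n_E ≥ 0 be real numbers. Then the set { |h₀₁|² + |h₀₂|² : h₀₁, h₀₂ ∈ ℂ with i + conj(h₀₁)·√(Γ(1+n_E)) + h₀₂·√(Γn_E) = 0 } has least element 1/(Γ(1+2n_E)). -/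
/-- Optimization over the free complex parameters `h₀₁, h₀₂` in the Lindblad-space
bound for displacement estimation of a bosonic mode coupled to a thermal bath. -/
theorem displacement_bound_optimization (Γ nE : ℝ) (hΓ : 0 < Γ) (hnE : 0 ≤ nE) :
    IsLeast
      {x : ℝ | ∃ h₀₁ h₀₂ : ℂ,
        Complex.I + (starRingEnd ℂ) h₀₁ * (Real.sqrt (Γ * (1 + nE)) : ℂ)
          + h₀₂ * (Real.sqrt (Γ * nE) : ℂ) = 0 ∧
        x = ‖h₀₁‖ ^ 2 + ‖h₀₂‖ ^ 2}
      (1 / (Γ * (1 + 2 * nE))) := by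
  set a : ℝ := Real.sqrt (Γ * (1 + nE)) with ha_def
  set b : ℝ := Real.sqrt (Γ * nE) with hb_def
  have ha0 : 0 ≤ a := Real.sqrt_nonneg _
  have hb0 : 0 ≤ b := Real.sqrt_nonneg _
  have ha2 : a ^ 2 = Γ * (1 + nE) := Real.sq_sqrt (by nlinarith)
  have hb2 : b ^ 2 = Γ * nE := Real.sq_sqrt (by nlinarith)
  have hS : a ^ 2 + b ^ 2 = Γ * (1 + 2 * nE) := by rw [ha2, hb2]; ring
  have hSpos : 0 < Γ * (1 + 2 * nE) := by nlinarith
  set S : ℝ := Γ * (1 + 2 * nE) with hS_def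
  constructor
  · refine ⟨Complex.I * (a : ℂ) / (S : ℂ), -Complex.I * (b : ℂ) / (S : ℂ), ?_, ?_⟩
    · have hS' : ((a : ℂ) ^ 2 + (b : ℂ) ^ 2) = ((S : ℝ) : ℂ) := by
        push_cast [← hS]; ring
      have hne : ((S : ℝ) : ℂ) ≠ 0 := by exact_mod_cast hSpos.ne'
      rw [map_div₀]
      simp only [map_mul, Complex.conj_I, Complex.conj_ofReal]
      field_simp
      linear_combination -Complex.I * hS'
    · have h1 : ‖Complex.I * (a : ℂ) / (S : ℂ)‖ = a / S := by
        simp [norm_div, Complex.norm_real, abs_of_nonneg ha0, abs_of_pos hSpos]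
      have h2 : ‖-Complex.I * (b : ℂ) / (S : ℂ)‖ = b / S := by
        simp [norm_div, Complex.norm_real, abs_of_nonneg hb0, abs_of_pos hSpos]
      rw [h1, h2]
      field_simp
      nlinarith [hS]
  · rintro x ⟨h₁, h₂, hc, rfl⟩
    have hc' : (starRingEnd ℂ) h₁ * (a : ℂ) + h₂ * (b : ℂ) = -Complex.I := by
      linear_combination hc
    have hnorm : ‖(starRingEnd ℂ) h₁ * (a : ℂ) + h₂ * (b : ℂ)‖ = 1 := by
      rw [hc']; simp
    have htri : (1 : ℝ) ≤ ‖h₁‖ * a + ‖h₂‖ * b := by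
      calc (1:ℝ) = ‖(starRingEnd ℂ) h₁ * (a : ℂ) + h₂ * (b : ℂ)‖ := hnorm.symm
        _ ≤ ‖(starRingEnd ℂ) h₁ * (a : ℂ)‖ + ‖h₂ * (b : ℂ)‖ := norm_add_le _ _
        _ = ‖h₁‖ * a + ‖h₂‖ * b := by
            simp [Complex.norm_real, abs_of_nonneg ha0, abs_of_nonneg hb0]
    rw [div_le_iff₀ hSpos]
    nlinarith [sq_nonneg (‖h₁‖ * b - ‖h₂‖ * a), norm_nonneg h₁, norm_nonneg h₂]
end

section
/- Let E be a complex Hilbert space, let A, B : E →L[ℂ] E be bounded self-adjoint operators, and let x ∈ E. Define ψ(s) = exp(−isA)x and ψ_C(s) = exp(−isB)x (operator exponentials in the Banach algebra of bounded operators). Then for every s ∈ ℝ, the function s ↦ ‖ψ(s) − ψ_C(s)‖² is differentiable with derivative 2·Im⟨ψ(s), (A − B)ψ_C(s)⟩. -/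
/-! Both evolutions solve `ψ' = -i M ψ`, so `d/ds ‖ψ - ψC‖² = 2 Re⟪ψ - ψC, -i (A ψ - B ψC)⟫
= 2 Im⟪ψ - ψC, A ψ - B ψC⟫`. Self-adjointness makes `⟪ψ, A ψ⟫` and `⟪ψC, B ψC⟫` real and turns
`⟪ψC, A ψ⟫` into the conjugate of `⟪ψ, A ψC⟫`, which leaves `2 Im⟪ψ, (A - B) ψC⟫`. -/

open NormedSpace Complex ComplexConjugate
open scoped InnerProductSpace

theorem hasDerivAt_exp_neg_I_mul_smul_apply {E : Type*} [NormedAddCommGroup E] [NormedSpace ℂ E]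
    [CompleteSpace E] (M : E →L[ℂ] E) (x : E) (s : ℝ) :
    HasDerivAt (fun t : ℝ => exp ((-(I * t)) • M) x) ((-I) • M (exp ((-(I * s)) • M) x)) s := by
  have hsmul : ∀ t : ℝ, (-(I * t)) • M = t • ((-I) • M) := fun t => by
    rw [← Complex.coe_smul, smul_smul, mul_comm, neg_mul_eq_mul_neg]
  have hexp := hasDerivAt_exp_smul_const' (𝕂 := ℝ) ((-I) • M) s
  have h := ((ContinuousLinearMap.apply ℂ E x).restrictScalars ℝ).hasFDerivAt.comp_hasDerivAt s hexp
  simpa [hsmul, Function.comp_def] using h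

theorem im_inner_sub_apply_sub_apply {𝕜 E : Type*} [RCLike 𝕜] [NormedAddCommGroup E]
    [InnerProductSpace 𝕜 E] [CompleteSpace E] {A B : E →L[𝕜] E}
    (hA : IsSelfAdjoint A) (hB : IsSelfAdjoint B) (u v : E) :
    RCLike.im ⟪u - v, A u - B v⟫_𝕜 = RCLike.im ⟪u, (A - B) v⟫_𝕜 := by
  have hvAu : ⟪v, A u⟫_𝕜 = conj ⟪u, A v⟫_𝕜 :=
    (hA.isSymmetric v u).symm.trans (inner_conj_symm _ _).symm
  have hu := hA.isSymmetric.im_inner_self_apply u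
  have hv := hB.isSymmetric.im_inner_self_apply v
  simp only [ContinuousLinearMap.coe_coe] at hu hv
  simp only [inner_sub_left, inner_sub_right, sub_apply, hvAu, map_sub, RCLike.conj_im, hu, hv]
  ring

theorem HasDerivAt.norm_sq_complex {E : Type*} [NormedAddCommGroup E]
    [InnerProductSpace ℂ E] {f : ℝ → E} {f' : E} {s : ℝ} (hf : HasDerivAt f f' s) :
    HasDerivAt (‖f ·‖ ^ 2) (2 * (⟪f s, f'⟫_ℂ).re) s := by
  let := InnerProductSpace.rclikeToReal ℂ E
  simpa only [real_inner_eq_re_inner ℂ, RCLike.re_to_complex] using hf.norm_sq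

/-- For unitary evolutions `ψ(s) = exp(−isA)x` and `ψ_C(s) = exp(−isB)x` generated by
bounded self-adjoint operators `A`, `B`, the squared distance `‖ψ(s) − ψ_C(s)‖²` is
differentiable in `s` with derivative `2·Im⟨ψ(s), (A − B)ψ_C(s)⟩`. -/
theorem deriv_sq_dist_evolutions {E : Type*} [NormedAddCommGroup E]
    [InnerProductSpace ℂ E] [CompleteSpace E]
    (A B : E →L[ℂ] E) (hA : IsSelfAdjoint A) (hB : IsSelfAdjoint B) (x : E)
    (ψ ψC : ℝ → E)
    (hψ : ∀ s : ℝ, ψ s = NormedSpace.exp ((-(Complex.I * (s : ℂ))) • A) x)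
    (hψC : ∀ s : ℝ, ψC s = NormedSpace.exp ((-(Complex.I * (s : ℂ))) • B) x) :
    ∀ s : ℝ, HasDerivAt (fun s : ℝ => ‖ψ s - ψC s‖ ^ 2)
      (2 * (inner ℂ (ψ s) ((A - B) (ψC s)) : ℂ).im) s := by
  intro s
  have hdiff := (hasDerivAt_exp_neg_I_mul_smul_apply A x s).fun_sub
    (hasDerivAt_exp_neg_I_mul_smul_apply B x s)
  simp only [← hψ, ← hψC, ← smul_sub] at hdiff
  convert hdiff.norm_sq_complex using 1
  have him := im_inner_sub_apply_sub_apply hA hB (ψ s) (ψC s)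
  rw [RCLike.im_to_complex, RCLike.im_to_complex] at him
  rw [inner_smul_right, ← him]
  simp
end

section
/- Let E be a complex Hilbert space, let A, B : E →L[ℂ] E be bounded self-adjoint operators, and let x ∈ E with ‖x‖ = 1. Define ψ(s) = exp(−isA)x and ψ_C(s) = exp(−isB)x. Then for every t ≥ 0, ‖ψ(t) − ψ_C(t)‖² ≤ 2t · sup_{s ∈ [0,t]} ‖(A − B)(ψ_C(s))‖. -/
/-!
Pass to the interaction picture `w(s) = exp(isA) exp(−isB) x`. Its derivative is
`i exp(isA) (A − B) exp(−isB) x`, whose norm is `‖(A − B) ψ_C(s)‖` because `exp(isA)` is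
unitary, so the mean value inequality gives `‖w(t) − x‖ ≤ t M` with `M` the supremum.
Applying the unitary `exp(−itA)` turns this into `‖ψ(t) − ψ_C(t)‖ ≤ t M`. Both evolutions
stay on the unit sphere, so also `‖ψ(t) − ψ_C(t)‖ ≤ 2`, and the product of the two bounds
is the claim.
-/

open NormedSpace Set

theorem IsCompact.le_biSup_of_continuousOn {X α : Type*} [TopologicalSpace X]
    [ConditionallyCompleteLinearOrder α] [TopologicalSpace α] [OrderTopology α]
    {f : X → α} {K : Set X} (hK : IsCompact K) (hf : ContinuousOn f K) {x : X} (hx : x ∈ K) :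
    f x ≤ ⨆ y ∈ K, f y :=
  le_ciSup₂ (f := fun y _ => f y) ((hK.bddAbove_image hf).mono <| by
    rintro _ ⟨_, ⟨y, rfl⟩, ⟨hy, rfl⟩⟩
    exact ⟨y, hy, rfl⟩) x hx

section RealBanachAlgebra

variable {𝔸 : Type*} [NormedRing 𝔸] [NormedAlgebra ℝ 𝔸] [CompleteSpace 𝔸]

theorem exp_smul_mul_exp_neg_smul (P : 𝔸) (t : ℝ) : exp (t • P) * exp (-t • P) = 1 := by
  let _ : NormedAlgebra ℚ 𝔸 := .restrictScalars ℚ ℝ 𝔸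
  rw [neg_smul, ← exp_add_of_commute (Commute.refl _).neg_right, add_neg_cancel,
    exp_zero]

theorem hasDerivAt_exp_neg_smul_mul_exp_smul (P Q : 𝔸) (s : ℝ) :
    HasDerivAt (fun s : ℝ => exp (-s • P) * exp (s • Q))
      (exp (-s • P) * (Q - P) * exp (s • Q)) s := by
  have hP : HasDerivAt (fun s : ℝ => exp (-s • P)) (-(exp (-s • P) * P)) s := by
    simpa [Function.comp_def] using
      (hasDerivAt_exp_smul_const (𝕂 := ℝ) P (-s)).scomp s (hasDerivAt_neg s)
  refine (hP.mul (hasDerivAt_exp_smul_const' (𝕂 := ℝ) Q s)).congr_deriv ?_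
  noncomm_ring

end RealBanachAlgebra

theorem norm_exp_smul_apply_sub_le {E : Type*} [NormedAddCommGroup E] [NormedSpace ℂ E]
    [CompleteSpace E] {P Q : E →L[ℂ] E} (hP : ∀ (s : ℝ) (y : E), ‖exp (s • P) y‖ = ‖y‖)
    (x : E) {t M : ℝ} (ht : 0 ≤ t) (hM : ∀ s ∈ Icc 0 t, ‖(Q - P) (exp (s • Q) x)‖ ≤ M) :
    ‖exp (t • P) x - exp (t • Q) x‖ ≤ M * t := by
  set w : ℝ → E := fun s => (exp (-s • P) * exp (s • Q)) x
  have hw (s : ℝ) : HasDerivAt w ((exp (-s • P) * (Q - P) * exp (s • Q)) x) s :=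
    ((ContinuousLinearMap.apply ℂ E x).restrictScalars ℝ).hasFDerivAt.comp_hasDerivAt s
      (hasDerivAt_exp_neg_smul_mul_exp_smul P Q s)
  have hmv : ‖w t - w 0‖ ≤ M * (t - 0) := by
    refine norm_image_sub_le_of_norm_deriv_le_segment' (fun s _ => (hw s).hasDerivWithinAt)
      (fun s hs => ?_) t ⟨ht, le_rfl⟩
    rw [mul_apply_eq_comp, mul_apply_eq_comp, hP]
    exact hM s (Ico_subset_Icc_self hs)
  have hw0 : w 0 = x := by simp [w, exp_zero]
  have hwt : exp (t • P) (w t) = exp (t • Q) x := by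
    rw [← mul_apply_eq_comp, ← mul_assoc,
      show exp (t • P) * exp (-t • P) = 1 from exp_smul_mul_exp_neg_smul P t, one_mul]
  rw [hw0, sub_zero] at hmv
  rwa [← hwt, ← map_sub, hP, norm_sub_rev]

theorem IsSelfAdjoint.exp_smul_neg_I_smul_mem_unitary {𝔸 : Type*} [NormedRing 𝔸]
    [NormedAlgebra ℂ 𝔸] [CompleteSpace 𝔸] [StarRing 𝔸] [ContinuousStar 𝔸] [StarModule ℂ 𝔸]
    {a : 𝔸} (ha : IsSelfAdjoint a) (s : ℝ) :
    NormedSpace.exp (s • -(Complex.I • a)) ∈ unitary 𝔸 := by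
  let _ : NormedAlgebra ℚ 𝔸 := .restrictScalars ℚ ℂ 𝔸
  exact exp_mem_unitary_of_mem_skewAdjoint <|
    skewAdjoint.smul_mem s (neg_mem ha.I_smul_mem_skewAdjoint)

/-- For unitary evolutions `ψ(s) = exp(−isA)x` and `ψ_C(s) = exp(−isB)x` generated by
bounded self-adjoint operators `A`, `B`, starting from a unit vector `x`, the drift
satisfies `‖ψ(t) − ψ_C(t)‖² ≤ 2t · sup_{s ∈ [0,t]} ‖(A − B)ψ_C(s)‖`. -/
theorem sq_dist_evolutions_le {E : Type*} [NormedAddCommGroup E]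
    [InnerProductSpace ℂ E] [CompleteSpace E]
    (A B : E →L[ℂ] E) (hA : IsSelfAdjoint A) (hB : IsSelfAdjoint B) (x : E)
    (hx : ‖x‖ = 1) (ψ ψC : ℝ → E)
    (hψ : ∀ s : ℝ, ψ s = NormedSpace.exp ((-(Complex.I * (s : ℂ))) • A) x)
    (hψC : ∀ s : ℝ, ψC s = NormedSpace.exp ((-(Complex.I * (s : ℂ))) • B) x) :
    ∀ t : ℝ, 0 ≤ t →
      ‖ψ t - ψC t‖ ^ 2 ≤ 2 * t * ⨆ s ∈ Set.Icc (0 : ℝ) t, ‖(A - B) (ψC s)‖ := by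
  intro t ht
  have hgen (T : E →L[ℂ] E) (s : ℝ) : (-(Complex.I * (s : ℂ))) • T = s • -(Complex.I • T) := by
    rw [← Complex.coe_smul, smul_neg, smul_smul, neg_smul, mul_comm]
  simp only [hgen] at hψ hψC
  have hU {T : E →L[ℂ] E} (hT : IsSelfAdjoint T) (s : ℝ) (y : E) :
      ‖exp (s • -(Complex.I • T)) y‖ = ‖y‖ :=
    ContinuousLinearMap.norm_map_of_mem_unitary (hT.exp_smul_neg_I_smul_mem_unitary s) y
  have hcont : ContinuousOn (fun s => ‖(A - B) (ψC s)‖) (Icc 0 t) := by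
    simp only [hψC]
    exact ((A - B).continuous.comp ((differentiable_exp_smul_const ℝ _).continuous.clm_apply
      continuous_const)).norm.continuousOn
  have hdrift : ‖ψ t - ψC t‖ ≤ (⨆ s ∈ Icc 0 t, ‖(A - B) (ψC s)‖) * t := by
    rw [hψ, hψC]
    refine norm_exp_smul_apply_sub_le (hU hA) x ht fun s hs => ?_
    rw [show -(Complex.I • B) - -(Complex.I • A) = Complex.I • (A - B) by rw [smul_sub]; abel,
      smul_apply, norm_smul, Complex.norm_I, one_mul, ← hψC]
    exact isCompact_Icc.le_biSup_of_continuousOn hcont hs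
  have hbounded : ‖ψ t - ψC t‖ ≤ 2 := by
    rw [← one_add_one_eq_two]
    refine norm_sub_le_of_le ?_ ?_
    · rw [hψ, hU hA, hx]
    · rw [hψC, hU hB, hx]
  nlinarith [norm_nonneg (ψ t - ψC t)]
end

section
/- There exists a unique real number x* > 0 satisfying exp(x*) = 1 + 2x*. Moreover: (i) 1.25 < x* < 1.27; (ii) the function g(x) = (1 − e^{−x})²/x attains its global maximum over (0, ∞) at x = x*, i.e. g(x) ≤ g(x*) for all x > 0; (iii) 6.5 < 16·g(x*) < 6.6; and (iv) 3.2 < 8·g(x*) < 3.3. -/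
/-!
The root `x*` of `exp x = 1 + 2x` is where the line `1 + 2x` crosses the strictly convex
function `exp` a second time, so `exp x < 1 + 2x` on `(0, x*)` and `exp x > 1 + 2x` beyond.
The derivative of `g(x) = (1 - e^{-x})² / x` is `e^{-x} (1 - e^{-x}) (1 + 2x - e^x) / x²`, so
`g` increases up to `x*` and decreases after it. At the root `e^{-x*} = 1 / (1 + 2x*)`, hence
`g(x*) = 4x* / (1 + 2x*)²`, and the numerical bounds follow from `1.25 < x* < 1.26`.
-/

open Real Set

lemma exp_lt_one_add_mul_of_lt {a c z : ℝ} (hc : exp c = 1 + a * c) (hz : 0 < z) (hzc : z < c) :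
    exp z < 1 + a * z := by
  have h := strictConvexOn_exp.secant_strict_mono_aux1 (mem_univ 0) (mem_univ c) hz hzc
  rw [exp_zero, hc] at h
  have : c * exp z < c * (1 + a * z) := by linarith
  exact lt_of_mul_lt_mul_left this (by linarith)

lemma one_add_mul_lt_exp_of_lt {a c z : ℝ} (hc0 : 0 < c) (hc : exp c = 1 + a * c) (hcz : c < z) :
    1 + a * z < exp z := by
  have h := strictConvexOn_exp.secant_strict_mono_aux1 (mem_univ 0) (mem_univ z) hc0 hcz
  rw [exp_zero, hc] at h
  have : c * (1 + a * z) < c * exp z := by linarith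
  exact lt_of_mul_lt_mul_left this hc0.le

lemma eq_of_exp_eq_one_add_mul {a c y : ℝ} (hc0 : 0 < c) (hc : exp c = 1 + a * c)
    (hy0 : 0 < y) (hy : exp y = 1 + a * y) : y = c := by
  rcases lt_trichotomy y c with hyc | hyc | hcy
  · exact absurd hy (exp_lt_one_add_mul_of_lt hc hy0 hyc).ne
  · exact hyc
  · exact absurd hc (exp_lt_one_add_mul_of_lt hy hc0 hcy).ne

lemma exp_one_point_two_five_lt : exp 1.25 < 3.5 := by
  have h4 : exp 1.25 ^ 4 < 3.5 ^ 4 := by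
    have h : exp 1.25 ^ 4 = exp 1 ^ 5 := by
      rw [← exp_nat_mul, ← exp_nat_mul]; norm_num
    rw [h]
    calc exp 1 ^ 5 < 2.7182818286 ^ 5 :=
          pow_lt_pow_left₀ exp_one_lt_d9 (exp_pos 1).le (by norm_num)
      _ < 3.5 ^ 4 := by norm_num
  exact lt_of_pow_lt_pow_left₀ 4 (by norm_num) h4

lemma lt_exp_one_point_two_six : (3.52 : ℝ) < exp 1.26 := by
  have h50 : (3.52 : ℝ) ^ 50 < exp 1.26 ^ 50 := by
    have h : exp 1.26 ^ 50 = exp 1 ^ 63 := by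
      rw [← exp_nat_mul, ← exp_nat_mul]; norm_num
    rw [h]
    calc (3.52 : ℝ) ^ 50 < 2.7182818283 ^ 63 := by norm_num
      _ < exp 1 ^ 63 := pow_lt_pow_left₀ exp_one_gt_d9 (by norm_num) (by norm_num)
  exact lt_of_pow_lt_pow_left₀ 50 (exp_pos _).le h50

lemma exists_exp_eq_one_add_two_mul : ∃ c ∈ Ioo (1.25 : ℝ) 1.26, exp c = 1 + 2 * c := by
  have hcont : ContinuousOn (fun x => exp x - (1 + 2 * x)) (Icc 1.25 1.26) := by fun_prop
  have hsign : (0 : ℝ) ∈ Ioo (exp 1.25 - (1 + 2 * 1.25)) (exp 1.26 - (1 + 2 * 1.26)) := by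
    constructor <;> linarith [exp_one_point_two_five_lt, lt_exp_one_point_two_six]
  obtain ⟨c, hc, hc0⟩ := intermediate_value_Ioo (by norm_num) hcont hsign
  exact ⟨c, hc, by linarith [hc0]⟩

lemma isMaxOn_of_hasDerivAt {f f' : ℝ → ℝ} {a c : ℝ} (hac : a < c)
    (hf : ∀ x ∈ Ioi a, HasDerivAt f (f' x) x)
    (hleft : ∀ x ∈ Ioo a c, 0 ≤ f' x) (hright : ∀ x ∈ Ioi c, f' x ≤ 0) :
    IsMaxOn f (Ioi a) c := by
  have hcont : ContinuousOn f (Ioi a) := fun x hx => (hf x hx).continuousAt.continuousWithinAt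
  have hmono : MonotoneOn f (Ioc a c) := by
    refine monotoneOn_of_hasDerivWithinAt_nonneg (convex_Ioc a c)
      (hcont.mono Ioc_subset_Ioi_self) (fun x hx => ?_) (by rwa [interior_Ioc])
    rw [interior_Ioc] at hx
    exact (hf x hx.1).hasDerivWithinAt
  have hanti : AntitoneOn f (Ici c) := by
    refine antitoneOn_of_hasDerivWithinAt_nonpos (convex_Ici c)
      (hcont.mono (Ici_subset_Ioi.2 hac)) (fun x hx => ?_) (by rwa [interior_Ici])
    rw [interior_Ici] at hx
    exact (hf x (hac.trans hx)).hasDerivWithinAt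
  intro y hy
  rcases le_total y c with hyc | hcy
  · exact hmono ⟨hy, hyc⟩ ⟨hac, le_rfl⟩ hyc
  · exact hanti (mem_Ici.2 le_rfl) hcy hcy

noncomputable def fisherRate (x : ℝ) : ℝ := (1 - exp (-x)) ^ 2 / x

lemma hasDerivAt_fisherRate {x : ℝ} (hx : x ≠ 0) :
    HasDerivAt fisherRate (exp (-x) * (1 - exp (-x)) * (1 + 2 * x - exp x) / x ^ 2) x := by
  have h := (((hasDerivAt_neg x).exp.const_sub 1).fun_pow 2).fun_div (hasDerivAt_id' x) hx
  refine h.congr_deriv ?_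
  have hinv : exp (-x) * exp x = 1 := by rw [← exp_add, neg_add_cancel, exp_zero]
  field_simp
  push_cast
  linear_combination (1 - exp (-x)) * hinv

lemma isMaxOn_fisherRate {c : ℝ} (hc0 : 0 < c) (hc : exp c = 1 + 2 * c) :
    IsMaxOn fisherRate (Ioi 0) c := by
  have hfactor : ∀ x : ℝ, 0 < x → 0 < exp (-x) * (1 - exp (-x)) / x ^ 2 := fun x hx =>
    div_pos (mul_pos (exp_pos _) (sub_pos.2 (exp_lt_one_iff.2 (neg_neg_of_pos hx))))
      (by positivity)
  refine isMaxOn_of_hasDerivAt hc0 (fun x hx => hasDerivAt_fisherRate (ne_of_gt hx))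
    (fun x hx => ?_) (fun x hx => ?_) <;> rw [mul_div_right_comm]
  · have := exp_lt_one_add_mul_of_lt hc hx.1 hx.2
    exact mul_nonneg (hfactor x hx.1).le (by linarith)
  · have := one_add_mul_lt_exp_of_lt hc0 hc hx
    exact mul_nonpos_of_nonneg_of_nonpos (hfactor x (hc0.trans hx)).le (by linarith)

lemma fisherRate_eq_of_exp_eq {c : ℝ} (hc : exp c = 1 + 2 * c) :
    fisherRate c = 4 * c / (1 + 2 * c) ^ 2 := by
  rcases eq_or_ne c 0 with rfl | hc0
  · simp [fisherRate]
  have hpos : 0 < 1 + 2 * c := hc ▸ exp_pos c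
  rw [fisherRate, exp_neg, hc]
  field_simp
  ring

/-- There is a unique `x* > 0` with `exp(x*) = 1 + 2x*`; moreover `1.25 < x* < 1.27`,
the function `g(x) = (1 − e^{−x})²/x` attains its global maximum over `(0,∞)` at `x*`,
and `6.5 < 16·g(x*) < 6.6` and `3.2 < 8·g(x*) < 3.3`. -/
theorem optimal_interrogation_time :
    ∃ x : ℝ, (0 < x ∧ Real.exp x = 1 + 2 * x)
      ∧ (∀ y : ℝ, 0 < y ∧ Real.exp y = 1 + 2 * y → y = x)
      ∧ (1.25 < x ∧ x < 1.27)
      ∧ (∀ y : ℝ, 0 < y →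
          (1 - Real.exp (-y)) ^ 2 / y ≤ (1 - Real.exp (-x)) ^ 2 / x)
      ∧ (6.5 < 16 * ((1 - Real.exp (-x)) ^ 2 / x)
          ∧ 16 * ((1 - Real.exp (-x)) ^ 2 / x) < 6.6)
      ∧ (3.2 < 8 * ((1 - Real.exp (-x)) ^ 2 / x)
          ∧ 8 * ((1 - Real.exp (-x)) ^ 2 / x) < 3.3) := by
  obtain ⟨c, ⟨hc_lo, hc_hi⟩, hc⟩ := exists_exp_eq_one_add_two_mul
  have hc0 : 0 < c := by linarith
  have hvalue : fisherRate c = 4 * c / (1 + 2 * c) ^ 2 := fisherRate_eq_of_exp_eq hc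
  have hsq : 0 < (1 + 2 * c) ^ 2 := by positivity
  have hlower : 6.5 < 16 * fisherRate c := by
    rw [hvalue, mul_div_assoc', lt_div_iff₀ hsq]; nlinarith
  have hupper : 16 * fisherRate c < 6.6 := by
    rw [hvalue, mul_div_assoc', div_lt_iff₀ hsq]; nlinarith
  refine ⟨c, ⟨hc0, hc⟩, fun y ⟨hy0, hy⟩ => eq_of_exp_eq_one_add_mul hc0 hc hy0 hy,
    ⟨hc_lo, by linarith⟩, fun y hy => isMaxOn_fisherRate hc0 hc hy, ⟨hlower, hupper⟩, ?_, ?_⟩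
  · show 3.2 < 8 * fisherRate c
    linarith
  · show 8 * fisherRate c < 3.3
    linarith
end

section
/- Let Γ > 0, n_E > 0 and N > 0 be real numbers. Define, for t > 0 small enough that all three quantities are positive: p₀(t) = 1 − tNΓ(1+n_E) − t(N+1)Γn_E, p₊(t) = t(N+1)Γn_E, p₋(t) = tNΓ(1+n_E), and F(t) = (t(2N+1)Γ)²/p₀(t) + (t(N+1)Γ)²/p₊(t) + (tNΓ)²/p₋(t). Then lim_{t→0⁺} F(t)/t = ΓN(1+2n_E)/(n_E(1+n_E)) + Γ/n_E. -/
open Filter Topology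

/-- The Fisher information per unit time of the short-time photon-counting measurement
on a Fock state `|N⟩` tends to `ΓN(1+2n_E)/(n_E(1+n_E)) + Γ/n_E` as `t → 0⁺`,
saturating the quantum bound for temperature estimation. -/
theorem fock_state_temperature_fisher_limit (Γ nE N : ℝ)
    (hΓ : 0 < Γ) (hnE : 0 < nE) (hN : 0 < N) :
    Tendsto
      (fun t : ℝ =>
        ((t * (2 * N + 1) * Γ) ^ 2 / (1 - t * N * Γ * (1 + nE) - t * (N + 1) * Γ * nE)
          + (t * (N + 1) * Γ) ^ 2 / (t * (N + 1) * Γ * nE)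
          + (t * N * Γ) ^ 2 / (t * N * Γ * (1 + nE))) / t)
      (𝓝[>] 0) (𝓝 (Γ * N * (1 + 2 * nE) / (nE * (1 + nE)) + Γ / nE)) := by
  set a : ℝ := N * Γ * (1 + nE) + (N + 1) * Γ * nE with ha
  have hapos : 0 < a := by positivity
  set g : ℝ → ℝ := fun t =>
    t * ((2 * N + 1) * Γ) ^ 2 / (1 - t * a) + ((N + 1) * Γ / nE + N * Γ / (1 + nE)) with hg
  have hlim : Tendsto g (𝓝[>] 0) (𝓝 (Γ * N * (1 + 2 * nE) / (nE * (1 + nE)) + Γ / nE)) := by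
    have hc : ContinuousAt g 0 := by
      apply ContinuousAt.add _ continuousAt_const
      apply ContinuousAt.div (by fun_prop) (by fun_prop)
      norm_num
    have h0 : g 0 = Γ * N * (1 + 2 * nE) / (nE * (1 + nE)) + Γ / nE := by
      simp only [hg]
      field_simp
      ring
    have := hc.tendsto
    rw [h0] at this
    exact this.mono_left nhdsWithin_le_nhds
  refine hlim.congr' ?_
  filter_upwards [Ioo_mem_nhdsGT_of_mem (Set.left_mem_Ico.2 (by positivity : (0:ℝ) < 1/a))]
    with t ht
  obtain ⟨ht0, hta⟩ := ht
  have hden : (0:ℝ) < 1 - t * a := by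
    have : t * a < 1 := (lt_div_iff₀ hapos).1 hta
    linarith
  have h1 : 1 - t * N * Γ * (1 + nE) - t * (N + 1) * Γ * nE = 1 - t * a := by ring
  rw [hg]
  simp only [h1]
  have hne : (1 : ℝ) + nE ≠ 0 := by positivity
  field_simp
  ring
end
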